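/- arXiv:1802.05175 — 3 statements merged into one kernel-verified Lean document; each statement's English description precedes it below -/
import Mathlib

section
/- Let N ≥ 1, let S be a symmetric N×N real matrix with nonnegative entries, and suppose (ρ_x)_{x=1}^N are compactly supported symmetric Borel probability measures on ℝ whose Stieltjes transforms m_x(z) = ∫ (τ − z)⁻¹ ρ_x(dτ) satisfy −1/m_x(z) = z + ∑_{y=1}^N S_{xy} m_y(z) for every x and every z in the complex upper half-plane. Let μ_{x,k} := ∫ τ^k ρ_x(dτ). Then μ_{x,0} = 1, all odd moments vanish, and for every x and every k ≥ 1 the even moments satisfy the recursion μ_{x,2k} = ∑_{y=1}^N S_{xy} ∑_{n=0}^{k−1} μ_{x,2(k−n−1)} μ_{y,2n}. -/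
open MeasureTheory

def measSupport (μ : Measure ℝ) : Set ℝ :=
  {x : ℝ | ∀ U ∈ nhds x, μ U ≠ 0}

/-!
Along `z = i s`, `s → ∞`, write `w = z⁻¹`. If every `ρ_x` lives on `[-R, R]`, then
`m_x(z) = -w φ_x(w)` with `φ_x(w) = ∫ (1 - τ w)⁻¹ dρ_x(τ) = ∑ₖ μ_{x,k} wᵏ` for `|w| < 1/R`.
Multiplying the QVE by `m_x(z)` gives `1 - φ_x(w) + w² φ_x(w) ∑_y S_{xy} φ_y(w) = 0` at points
`w` accumulating at `0`, so by the identity theorem every Taylor coefficient of the left side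
vanishes; the coefficient of `wᵏ` is the recursion for `μ_{x,k}`. Symmetry of `ρ_x` kills the odd
moments, and with them the odd terms of the recursion.
-/

open Filter Topology Finset
open scoped NNReal

theorem hasFPowerSeriesOnBall_ofScalars_of_hasSum {c : ℕ → ℂ} {f : ℂ → ℂ} {r : ℝ≥0} (hr : 0 < r)
    (hf : ∀ w : ℂ, ‖w‖ < r → HasSum (fun n ↦ c n * w ^ n) (f w)) :
    HasFPowerSeriesOnBall f (.ofScalars ℂ c) 0 r where
  r_le := by
    refine ENNReal.le_of_forall_nnreal_lt fun s hs ↦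
      FormalMultilinearSeries.le_radius_of_summable _ ?_
    simpa [FormalMultilinearSeries.ofScalars_norm, norm_mul] using
      (hf s (by simpa using hs)).summable.norm
  r_pos := by simpa using hr
  hasSum {w} hw := by
    simpa [FormalMultilinearSeries.ofScalars_apply_eq, mul_comm] using hf w (by simpa using hw)

theorem eq_zero_of_hasSum_of_frequently_eq_zero {c : ℕ → ℂ} {f : ℂ → ℂ} {r : ℝ≥0} (hr : 0 < r)
    (hf : ∀ w : ℂ, ‖w‖ < r → HasSum (fun n ↦ c n * w ^ n) (f w))
    (hzero : ∃ᶠ w in 𝓝[≠] 0, f w = 0) : c = 0 := by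
  by_contra hc
  refine hzero ((hasFPowerSeriesOnBall_ofScalars_of_hasSum hr hf).hasFPowerSeriesAt.locally_ne_zero
    ?_)
  rwa [Ne, FormalMultilinearSeries.ofScalars_series_eq_zero]

theorem hasSum_sum_range_mul_pow {f g : ℕ → ℂ} {w a b : ℂ}
    (hf : HasSum (fun n ↦ f n * w ^ n) a) (hg : HasSum (fun n ↦ g n * w ^ n) b) :
    HasSum (fun n ↦ (∑ i ∈ range (n + 1), f (n - i) * g i) * w ^ n) (a * b) := by
  have := hasSum_sum_range_mul_of_summable_norm hg.summable.norm hf.summable.norm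
  rw [hf.tsum_eq, hg.tsum_eq, mul_comm b] at this
  refine this.congr_fun fun n ↦ ?_
  rw [sum_mul]
  refine sum_congr rfl fun i hi ↦ ?_
  rw [mul_mul_mul_comm, ← pow_add, Nat.add_sub_cancel' (by simpa [Nat.lt_succ_iff] using hi),
    mul_comm (g i)]

/-- For `n < 2` the inner sum is empty since `n - 1` truncates to `0`. -/
theorem hasSum_sum_range_sub_one_mul_pow {f g : ℕ → ℂ} {w a b : ℂ}
    (hf : HasSum (fun n ↦ f n * w ^ n) a) (hg : HasSum (fun n ↦ g n * w ^ n) b) :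
    HasSum (fun n ↦ (∑ i ∈ range (n - 1), f (n - 2 - i) * g i) * w ^ n) (w ^ 2 * (a * b)) := by
  rw [← hasSum_nat_add_iff' 2]
  simp only [sum_range_succ, range_zero, sum_empty, zero_add, Nat.zero_sub, Nat.sub_self,
    zero_mul, sub_zero]
  refine ((hasSum_sum_range_mul_pow hf hg).mul_left (w ^ 2)).congr_fun fun n ↦ ?_
  simp only [Nat.add_sub_cancel, show n + 2 - 1 = n + 1 by omega, pow_add]
  ring

theorem sum_range_two_mul_sub_one_eq_sum_even {M : Type*} [AddCommMonoid M] {f : ℕ → M}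
    (hf : ∀ n, f (2 * n + 1) = 0) (k : ℕ) :
    ∑ n ∈ range (2 * k - 1), f n = ∑ n ∈ range k, f (2 * n) := by
  have key : ∀ k, ∑ n ∈ range (2 * k + 1), f n = ∑ n ∈ range (k + 1), f (2 * n) := by
    intro k
    induction k with
    | zero => simp
    | succ k ih =>
      rw [show 2 * (k + 1) + 1 = 2 * k + 1 + 1 + 1 by ring, sum_range_succ, sum_range_succ, ih,
        hf, add_zero, sum_range_succ (fun n ↦ f (2 * n)) (k + 1)]
      rfl
  cases k with
  | zero => simp
  | succ k => simpa [Nat.mul_succ] using key k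

theorem integral_pow_eq_zero_of_map_neg_eq {μ : Measure ℝ} (h : μ.map (fun τ ↦ -τ) = μ) {n : ℕ}
    (hn : Odd n) : ∫ τ, τ ^ n ∂μ = 0 := by
  have := integral_map (μ := μ) measurable_neg.aemeasurable
    (continuous_pow n).aestronglyMeasurable
  rw [h] at this
  simp only [hn.neg_pow, integral_neg] at this
  linarith

theorem measSupport_eq_support (μ : Measure ℝ) : measSupport μ = μ.support := by
  ext x
  simp [measSupport, Measure.mem_support_iff_forall, pos_iff_ne_zero]

theorem exists_ae_abs_le_of_isCompact_measSupport {ι : Type*} [Finite ι] {ρ : ι → Measure ℝ}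
    (h : ∀ x, IsCompact (measSupport (ρ x))) :
    ∃ R : ℝ≥0, 0 < R ∧ ∀ x, ∀ᵐ τ : ℝ ∂ρ x, |τ| ≤ R := by
  obtain ⟨R, hR, hsub⟩ := (isCompact_iUnion h).isBounded.subset_closedBall_lt 0 0
  refine ⟨R.toNNReal, by simpa using hR, fun x ↦ ?_⟩
  filter_upwards [measSupport_eq_support (ρ x) ▸ Measure.support_mem_ae] with τ hτ
  simpa [hR.le] using hsub (Set.mem_iUnion_of_mem x hτ)

noncomputable def momentOGF (μ : Measure ℝ) (w : ℂ) : ℂ :=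
  ∫ τ, (1 - τ * w)⁻¹ ∂μ

theorem integral_inv_sub_eq_neg_inv_mul_momentOGF (μ : Measure ℝ) {z : ℂ} (hz : z ≠ 0) :
    ∫ τ, ((τ : ℂ) - z)⁻¹ ∂μ = -z⁻¹ * momentOGF μ z⁻¹ := by
  rw [momentOGF, ← integral_const_mul]
  congr 1 with τ
  rw [show (1 : ℂ) - τ * z⁻¹ = -((τ - z) * z⁻¹) by field_simp; ring, inv_neg, mul_inv, inv_inv]
  field_simp

theorem hasSum_momentOGF {μ : Measure ℝ} [IsFiniteMeasure μ] {R : ℝ≥0}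
    (hR : ∀ᵐ τ : ℝ ∂μ, |τ| ≤ R) {w : ℂ} (hw : ‖w‖ * R < 1) :
    HasSum (fun k ↦ ((∫ τ, τ ^ k ∂μ : ℝ) : ℂ) * w ^ k) (momentOGF μ w) := by
  have hbound : ∀ k, ∀ᵐ τ : ℝ ∂μ, ‖((τ : ℂ) * w) ^ k‖ ≤ (‖w‖ * R) ^ k := fun k ↦ by
    filter_upwards [hR] with τ hτ
    rw [norm_pow, norm_mul, Complex.norm_real, Real.norm_eq_abs, mul_comm]
    gcongr
  have hint : ∀ k, Integrable (fun τ : ℝ ↦ ((τ : ℂ) * w) ^ k) μ := fun k ↦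
    .of_bound (by fun_prop) _ (hbound k)
  have hsum : Summable fun k ↦ ∫ τ, ‖((τ : ℂ) * w) ^ k‖ ∂μ := by
    refine .of_nonneg_of_le (fun k ↦ integral_nonneg fun _ ↦ norm_nonneg _) (fun k ↦ ?_)
      ((summable_geometric_of_lt_one (by positivity) hw).mul_left (μ.real Set.univ))
    simpa using integral_mono_ae (hint k).norm (integrable_const _) (hbound k)
  have hsum_eq : momentOGF μ w = ∫ τ, ∑' k, ((τ : ℂ) * w) ^ k ∂μ := by
    refine integral_congr_ae ?_
    filter_upwards [hR] with τ hτ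
    refine (tsum_geometric_of_norm_lt_one ?_).symm
    calc ‖(τ : ℂ) * w‖ = |τ| * ‖w‖ := by simp
      _ ≤ R * ‖w‖ := by gcongr
      _ < 1 := by rwa [mul_comm]
  rw [hsum_eq]
  refine (hasSum_integral_of_summable_integral_norm hint hsum).congr_fun fun k ↦ ?_
  simp_rw [mul_pow, integral_mul_const, ← Complex.ofReal_pow, integral_complex_ofReal]

theorem hasFPowerSeriesOnBall_momentOGF {μ : Measure ℝ} [IsFiniteMeasure μ] {R : ℝ≥0}
    (hR0 : 0 < R) (hR : ∀ᵐ τ : ℝ ∂μ, |τ| ≤ R) :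
    HasFPowerSeriesOnBall (momentOGF μ) (.ofScalars ℂ fun k ↦ ((∫ τ, τ ^ k ∂μ : ℝ) : ℂ)) 0
      (R⁻¹ : ℝ≥0) :=
  hasFPowerSeriesOnBall_ofScalars_of_hasSum (inv_pos.2 hR0) fun _ hw ↦
    hasSum_momentOGF hR ((lt_div_iff₀ (mod_cast hR0)).1 (by simpa using hw))

theorem eventually_momentOGF_ne_zero {μ : Measure ℝ} [IsProbabilityMeasure μ] {R : ℝ≥0}
    (hR0 : 0 < R) (hR : ∀ᵐ τ : ℝ ∂μ, |τ| ≤ R) : ∀ᶠ w in 𝓝 0, momentOGF μ w ≠ 0 :=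
  (hasFPowerSeriesOnBall_momentOGF hR0 hR).hasFPowerSeriesAt.continuousAt.eventually_ne
    (by simp [momentOGF])

theorem tendsto_inv_ofReal_mul_I_atTop :
    Tendsto (fun s : ℝ ↦ ((s : ℂ) * Complex.I)⁻¹) atTop (𝓝[≠] 0) := by
  refine tendsto_nhdsWithin_iff.2 ⟨?_, ?_⟩
  · rw [tendsto_zero_iff_norm_tendsto_zero]
    simpa [Function.comp_def] using tendsto_inv_atTop_zero.comp tendsto_abs_atTop_atTop
  · filter_upwards [eventually_ne_atTop 0] with s hs
    simpa using hs

section QVE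

variable {ι : Type*} [Fintype ι] (S : Matrix ι ι ℝ) (ρ : ι → Measure ℝ)

noncomputable def qveDefect (x : ι) (w : ℂ) : ℂ :=
  1 - momentOGF (ρ x) w + ∑ y, (S x y : ℂ) * (w ^ 2 * (momentOGF (ρ x) w * momentOGF (ρ y) w))

theorem qveDefect_inv_eq_zero {x : ι} {z : ℂ} (hz : z ≠ 0) (hφ : momentOGF (ρ x) z⁻¹ ≠ 0)
    (hQVE : -(∫ τ, ((τ : ℂ) - z)⁻¹ ∂ρ x)⁻¹ = z + ∑ y, (S x y : ℂ) * ∫ τ, ((τ : ℂ) - z)⁻¹ ∂ρ y) :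
    qveDefect S ρ x z⁻¹ = 0 := by
  simp only [integral_inv_sub_eq_neg_inv_mul_momentOGF _ hz] at hQVE
  obtain ⟨w, rfl⟩ : ∃ w, z = w⁻¹ := ⟨z⁻¹, (inv_inv z).symm⟩
  simp only [inv_inv] at hQVE hφ ⊢
  have hw : w ≠ 0 := by simpa using hz
  set φ := momentOGF (ρ x) w
  set T := ∑ y, (S x y : ℂ) * momentOGF (ρ y) w
  rw [show ∑ y, (S x y : ℂ) * (-w * momentOGF (ρ y) w) = -w * T by
    rw [mul_sum]; exact sum_congr rfl fun _ _ ↦ by ring] at hQVE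
  rw [qveDefect, show ∑ y, (S x y : ℂ) * (w ^ 2 * (φ * momentOGF (ρ y) w)) = w ^ 2 * φ * T by
    rw [mul_sum]; exact sum_congr rfl fun _ _ ↦ by ring]
  have hφ_inv : -(-w * φ)⁻¹ * (w * φ) = 1 := by field_simp
  linear_combination (w * φ) * hQVE - hφ_inv + φ * mul_inv_cancel₀ hw

theorem hasSum_qveDefect [∀ x, IsFiniteMeasure (ρ x)] {R : ℝ≥0}
    (hR : ∀ x, ∀ᵐ τ : ℝ ∂ρ x, |τ| ≤ R) (x : ι) {w : ℂ} (hw : ‖w‖ * R < 1) :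
    HasSum (fun n ↦ ((if n = 0 then 1 else 0) - ((∫ τ, τ ^ n ∂ρ x : ℝ) : ℂ) +
      ∑ y, (S x y : ℂ) * ∑ i ∈ range (n - 1),
        ((∫ τ, τ ^ (n - 2 - i) ∂ρ x : ℝ) : ℂ) * ((∫ τ, τ ^ i ∂ρ y : ℝ) : ℂ)) * w ^ n)
      (qveDefect S ρ x w) := by
  have hφ (y : ι) := hasSum_momentOGF (hR y) hw
  have hone : HasSum (fun n ↦ (if n = 0 then 1 else 0 : ℂ) * w ^ n) 1 := by
    convert hasSum_ite_eq 0 (1 : ℂ) using 2 with n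
    split_ifs with h <;> simp [h]
  refine ((hone.sub (hφ x)).add (hasSum_sum fun y _ ↦
    (hasSum_sum_range_sub_one_mul_pow (hφ x) (hφ y)).mul_left (S x y : ℂ))).congr_fun fun n ↦ ?_
  simp only [sub_mul, add_mul, sum_mul, mul_assoc]

theorem moment_eq_sum_of_qve [∀ x, IsProbabilityMeasure (ρ x)] {R : ℝ≥0} (hR0 : 0 < R)
    (hR : ∀ x, ∀ᵐ τ : ℝ ∂ρ x, |τ| ≤ R)
    (hQVE : ∀ x (z : ℂ), 0 < z.im →
      -(∫ τ, ((τ : ℂ) - z)⁻¹ ∂ρ x)⁻¹ = z + ∑ y, (S x y : ℂ) * ∫ τ, ((τ : ℂ) - z)⁻¹ ∂ρ y)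
    (x : ι) {k : ℕ} (hk : k ≠ 0) :
    ∫ τ, τ ^ k ∂ρ x =
      ∑ y, S x y * ∑ n ∈ range (k - 1), (∫ τ, τ ^ (k - 2 - n) ∂ρ x) * ∫ τ, τ ^ n ∂ρ y := by
  have hzero : ∃ᶠ w in 𝓝[≠] 0, qveDefect S ρ x w = 0 := by
    refine tendsto_inv_ofReal_mul_I_atTop.frequently (Eventually.frequently ?_)
    filter_upwards [eventually_gt_atTop 0, (tendsto_inv_ofReal_mul_I_atTop.mono_right
      nhdsWithin_le_nhds).eventually (eventually_momentOGF_ne_zero hR0 (hR x))] with s hs hφ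
    exact qveDefect_inv_eq_zero S ρ (by simpa using hs.ne') hφ (hQVE x _ (by simpa using hs))
  have hcoeff := congr_fun (eq_zero_of_hasSum_of_frequently_eq_zero (inv_pos.2 hR0)
    (fun w hw ↦ hasSum_qveDefect S ρ hR x ((lt_div_iff₀ (mod_cast hR0)).1 (by simpa using hw)))
    hzero) k
  rw [if_neg hk, Pi.zero_apply, zero_sub, neg_add_eq_zero] at hcoeff
  exact_mod_cast hcoeff

end QVE

theorem qve_moment_recursion_general (N : ℕ)
    (S : Matrix (Fin N) (Fin N) ℝ)
    (ρ : Fin N → Measure ℝ) [∀ x, IsProbabilityMeasure (ρ x)]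
    (hcomp : ∀ x, IsCompact (measSupport (ρ x)))
    (hsymm : ∀ x, (ρ x).map (fun τ => -τ) = ρ x)
    (m : Fin N → ℂ → ℂ)
    (hm : ∀ x (z : ℂ), m x z = ∫ τ, ((τ : ℂ) - z)⁻¹ ∂(ρ x))
    (hQVE : ∀ x (z : ℂ), 0 < z.im →
      -(m x z)⁻¹ = z + ∑ y, (S x y : ℂ) * m y z)
    (μmom : Fin N → ℕ → ℝ)
    (hμ : ∀ x k, μmom x k = ∫ τ, τ ^ k ∂(ρ x)) :
    (∀ x, μmom x 0 = 1) ∧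
      (∀ x k, μmom x (2 * k + 1) = 0) ∧
      (∀ x (k : ℕ), 1 ≤ k →
        μmom x (2 * k) = ∑ y, S x y *
          ∑ n ∈ Finset.range k, μmom x (2 * (k - n - 1)) * μmom y (2 * n)) := by
  obtain ⟨R, hR0, hR⟩ := exists_ae_abs_le_of_isCompact_measSupport hcomp
  have hodd : ∀ x k, μmom x (2 * k + 1) = 0 := fun x k ↦ by
    rw [hμ]
    exact integral_pow_eq_zero_of_map_neg_eq (hsymm x) (odd_two_mul_add_one k)
  refine ⟨fun x ↦ by simp [hμ], hodd, fun x k hk ↦ ?_⟩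
  have hrec := moment_eq_sum_of_qve S ρ hR0 hR (fun x z hz ↦ by simpa only [hm] using hQVE x z hz)
    x (k := 2 * k) (by omega)
  simp only [← hμ] at hrec
  rw [hrec]
  refine sum_congr rfl fun y _ ↦ congrArg _ ?_
  rw [sum_range_two_mul_sub_one_eq_sum_even (fun n ↦ by rw [hodd, mul_zero])]
  exact sum_congr rfl fun n _ ↦ by rw [show 2 * k - 2 - 2 * n = 2 * (k - n - 1) by omega]

/-- If the Stieltjes transforms of compactly supported symmetric probability measures
solve the quadratic vector equation with variance matrix `S`, then the moments satisfy
`μ_{x,0} = 1`, the odd moments vanish, and the even moments satisfy the Catalan-type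
recursion with weights `S`. -/
theorem qve_moment_recursion (N : ℕ) (hN : 1 ≤ N)
    (S : Matrix (Fin N) (Fin N) ℝ) (hsymS : S.IsSymm) (hSnn : ∀ x y, 0 ≤ S x y)
    (ρ : Fin N → Measure ℝ) [∀ x, IsProbabilityMeasure (ρ x)]
    (hcomp : ∀ x, IsCompact (measSupport (ρ x)))
    (hsymm : ∀ x, (ρ x).map (fun τ => -τ) = ρ x)
    (m : Fin N → ℂ → ℂ)
    (hm : ∀ x (z : ℂ), m x z = ∫ τ, ((τ : ℂ) - z)⁻¹ ∂(ρ x))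
    (hQVE : ∀ x (z : ℂ), 0 < z.im →
      -(m x z)⁻¹ = z + ∑ y, (S x y : ℂ) * m y z)
    (μmom : Fin N → ℕ → ℝ)
    (hμ : ∀ x k, μmom x k = ∫ τ, τ ^ k ∂(ρ x)) :
    (∀ x, μmom x 0 = 1) ∧
      (∀ x k, μmom x (2 * k + 1) = 0) ∧
      (∀ x (k : ℕ), 1 ≤ k →
        μmom x (2 * k) = ∑ y, S x y *
          ∑ n ∈ Finset.range k, μmom x (2 * (k - n - 1)) * μmom y (2 * n)) :=
  qve_moment_recursion_general N S ρ hcomp hsymm m hm hQVE μmom hμ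
end

section
/- Let N ≥ 1, let S be an N×N real matrix with nonnegative entries, and let (c_{x,k})_{1≤x≤N, k≥0} be nonnegative reals with c_{x,0} = 1 for all x and satisfying the recursion c_{x,k} = ∑_{y=1}^N S_{xy} ∑_{n=0}^{k−1} c_{x,k−n−1} c_{y,n} for all x and all k ≥ 1. Then c_{x,k} ≤ C_k · ‖S‖^k for every x and k, where C_k is the k-th Catalan number. -/
/-- The matrix norm induced by the maximum norm on `ℝ^N`: the maximum absolute row sum. -/
noncomputable def maxRowNorm {N : ℕ} (M : Matrix (Fin N) (Fin N) ℝ) : ℝ :=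
  ⨆ x, ∑ y, |M x y|

/-!
Strong induction on `k`. The recursion writes `c x (k + 1)` as an `S`-weighted sum of
convolutions of lower coefficients; the weights contribute at most a row sum of `|S|`, hence
`‖S‖`, and the convolution of the Catalan bounds is again a Catalan bound by the Catalan
recursion itself.
-/

open Finset

theorem catalan_succ_eq_sum_range (m : ℕ) :
    (catalan (m + 1) : ℝ) = ∑ n ∈ range (m + 1), (catalan (m - n) : ℝ) * catalan n := by
  rw [catalan_succ', Nat.sum_antidiagonal_eq_sum_range_succ (fun i j => catalan i * catalan j)]
  push_cast
  exact sum_congr rfl fun n _ => mul_comm _ _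

theorem sum_range_mul_le_catalan_succ_mul_pow {a b : ℕ → ℝ} {r : ℝ} (hr : 0 ≤ r) (m : ℕ)
    (hb₀ : ∀ n ≤ m, 0 ≤ b n) (ha : ∀ n ≤ m, a n ≤ catalan n * r ^ n)
    (hb : ∀ n ≤ m, b n ≤ catalan n * r ^ n) :
    ∑ n ∈ range (m + 1), a (m - n) * b n ≤ catalan (m + 1) * r ^ m := by
  rw [catalan_succ_eq_sum_range, sum_mul]
  refine sum_le_sum fun n hn => ?_
  have hnm : n ≤ m := Nat.lt_succ_iff.mp (mem_range.mp hn)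
  calc a (m - n) * b n
      ≤ (catalan (m - n) * r ^ (m - n)) * (catalan n * r ^ n) :=
        mul_le_mul (ha _ (Nat.sub_le m n)) (hb n hnm) (hb₀ n hnm) (by positivity)
    _ = catalan (m - n) * catalan n * r ^ (m - n + n) := by ring
    _ = catalan (m - n) * catalan n * r ^ m := by rw [Nat.sub_add_cancel hnm]

theorem sum_abs_le_maxRowNorm {N : ℕ} (M : Matrix (Fin N) (Fin N) ℝ) (x : Fin N) :
    ∑ y, |M x y| ≤ maxRowNorm M :=
  le_ciSup (f := fun x => ∑ y, |M x y|) (Set.finite_range _).bddAbove x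

theorem maxRowNorm_nonneg {N : ℕ} (M : Matrix (Fin N) (Fin N) ℝ) : 0 ≤ maxRowNorm M :=
  Real.iSup_nonneg fun _ => sum_nonneg fun _ _ => abs_nonneg _

theorem sum_mul_le_maxRowNorm_mul {N : ℕ} (M : Matrix (Fin N) (Fin N) ℝ) (x : Fin N)
    {v : Fin N → ℝ} {B : ℝ} (hv₀ : ∀ y, 0 ≤ v y) (hv : ∀ y, v y ≤ B) :
    ∑ y, M x y * v y ≤ maxRowNorm M * B := by
  have hB : 0 ≤ B := (hv₀ x).trans (hv x)
  calc ∑ y, M x y * v y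
      ≤ ∑ y, |M x y| * B :=
        sum_le_sum fun y _ => (mul_le_mul_of_nonneg_right (le_abs_self _) (hv₀ y)).trans
          (mul_le_mul_of_nonneg_left (hv y) (abs_nonneg _))
    _ = (∑ y, |M x y|) * B := (sum_mul ..).symm
    _ ≤ maxRowNorm M * B := mul_le_mul_of_nonneg_right (sum_abs_le_maxRowNorm M x) hB

theorem moment_recursion_catalan_bound_general (N : ℕ)
    (S : Matrix (Fin N) (Fin N) ℝ)
    (c : Fin N → ℕ → ℝ) (hcnn : ∀ x k, 0 ≤ c x k) (hc0 : ∀ x, c x 0 = 1)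
    (hrec : ∀ x (k : ℕ), 1 ≤ k →
      c x k = ∑ y, S x y * ∑ n ∈ Finset.range k, c x (k - n - 1) * c y n) :
    ∀ x k, c x k ≤ (catalan k : ℝ) * maxRowNorm S ^ k := by
  intro x k
  induction k using Nat.strong_induction_on generalizing x with
  | _ k ih =>
    cases k with
    | zero => simp [hc0 x]
    | succ m =>
      have hconv : ∀ y, ∑ n ∈ range (m + 1), c x (m + 1 - n - 1) * c y n
          ≤ catalan (m + 1) * maxRowNorm S ^ m := fun y => by
        simp only [Nat.add_sub_cancel, Nat.sub_right_comm _ _ 1]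
        exact sum_range_mul_le_catalan_succ_mul_pow (maxRowNorm_nonneg S) m
          (fun n _ => hcnn y n) (fun n hn => ih n (by omega) x) (fun n hn => ih n (by omega) y)
      calc c x (m + 1)
          ≤ maxRowNorm S * (catalan (m + 1) * maxRowNorm S ^ m) := by
            rw [hrec x (m + 1) (by omega)]
            exact sum_mul_le_maxRowNorm_mul S x (fun y => sum_nonneg fun n _ =>
              mul_nonneg (hcnn _ _) (hcnn _ _)) hconv
        _ = catalan (m + 1) * maxRowNorm S ^ (m + 1) := by ring

/-- Nonnegative coefficients satisfying the Catalan-type recursion with weights from a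
nonnegative matrix `S` are bounded by `C_k ‖S‖^k`. -/
theorem moment_recursion_catalan_bound (N : ℕ) (hN : 1 ≤ N)
    (S : Matrix (Fin N) (Fin N) ℝ) (hSnn : ∀ x y, 0 ≤ S x y)
    (c : Fin N → ℕ → ℝ) (hcnn : ∀ x k, 0 ≤ c x k) (hc0 : ∀ x, c x 0 = 1)
    (hrec : ∀ x (k : ℕ), 1 ≤ k →
      c x k = ∑ y, S x y * ∑ n ∈ Finset.range k, c x (k - n - 1) * c y n) :
    ∀ x k, c x k ≤ (catalan k : ℝ) * maxRowNorm S ^ k :=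
  moment_recursion_catalan_bound_general N S c hcnn hc0 hrec
end

section
/- Let (z_j)_{j≥0} be reals with z_0 = 1, 0 < z_j ≤ 1 for all j ≥ 1, and z_{a+b+1} ≤ z_a·z_b for all integers a, b ≥ 0. Let K, t, h, n be integers with n ≥ 1, t ≥ 0, t + n ≤ K, h ≥ 2n, and h ≤ K − t. For ω ∈ {+1,−1}^n let h_i := h + ∑_{j=1}^i ω_j; say ω is admissible if h_i ≤ K − t − i for all 0 ≤ i ≤ n. For 0 ≤ i < n set q_{i+1} := (1/2)·(K − t − i − h_i)/(K − t − i) and P^{top}(ω) := ∏_{i=0}^{n−1} q_{i+1}^{𝟙(ω_{i+1}=+1)} (1 − q_{i+1})^{𝟙(ω_{i+1}=−1)}. Then ∑_{ω admissible} P^{top}(ω) · W_D(ω) ≤ 2^{−n} ∑_{ω ∈ {+1,−1}^n} W_D(ω), where W_D(ω) := ∏_{j≥1} z_j^{D_j(ω)} and D_j(ω) is the number of maximal blocks of consecutive −1's in ω of length exactly j. -/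
/-- The `p`-th step (`+1` or `-1`) of the sign sequence `ω`, extended by `0` outside. -/
def stepB (n : ℕ) (ω : Fin n → Bool) (p : ℕ) : ℤ :=
  if hp : p < n then (if ω ⟨p, hp⟩ then 1 else -1) else 0

/-- Height after `i` steps of the walk started at height `h` with increments `ω`. -/
def hgtB (n : ℕ) (ω : Fin n → Bool) (h : ℤ) (i : ℕ) : ℤ :=
  h + ∑ j ∈ Finset.range i, stepB n ω j

/-- Number of maximal blocks of consecutive `-1`'s of length exactly `j` in `ω`. -/
def downBlocks (n : ℕ) (ω : Fin n → Bool) (j : ℕ) : ℕ :=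
  ((Finset.range n).filter fun i =>
    (∀ m < j, stepB n ω (i + m) = -1) ∧ stepB n ω (i + j) ≠ -1 ∧
      (i = 0 ∨ stepB n ω (i - 1) ≠ -1)).card

/-- The `top` one-step up-probability at step `i+1`. -/
noncomputable def qTop (K t : ℤ) (n : ℕ) (ω : Fin n → Bool) (h : ℤ) (i : ℕ) : ℝ :=
  1 / 2 * (((K : ℝ) - (t : ℝ) - (i : ℝ) - (hgtB n ω h i : ℝ)) /
    ((K : ℝ) - (t : ℝ) - (i : ℝ)))

/-- The `top` law of a path `ω`. -/
noncomputable def pTopProb (K t : ℤ) (n : ℕ) (ω : Fin n → Bool) (h : ℤ) : ℝ :=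
  ∏ i ∈ Finset.range n,
    (qTop K t n ω h i) ^ (if stepB n ω i = 1 then 1 else 0) *
      (1 - qTop K t n ω h i) ^ (if stepB n ω i = -1 then 1 else 0)

/-!
Induct on `n` by conditioning on the first step, which shifts the line by one (`t ↦ t + 1`).
To make the weight recursive, remember the number `k` of `-1`'s accumulated so far in the
current run: an up-step then closes the run and contributes `z k`, a down-step lengthens it.
By submultiplicativity, `runWeight z (k + 1) ω ≤ z k * runWeight z 0 ω`, so the down branch
carries the smaller total weight. As long as the height is nonnegative (as `h ≥ 2n`),
the top law steps up with probability `q ≤ 1/2`, i.e. it favours the lighter branch, so its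
weighted sum is at most the uniform average.
-/

def stepSign (b : Bool) : ℤ := if b then 1 else -1

section Steps

variable {n : ℕ}

lemma stepB_of_lt (ω : Fin n → Bool) {p : ℕ} (hp : p < n) :
    stepB n ω p = stepSign (ω ⟨p, hp⟩) :=
  dif_pos hp

lemma stepB_of_le (ω : Fin n → Bool) {p : ℕ} (hp : n ≤ p) : stepB n ω p = 0 :=
  dif_neg hp.not_gt

lemma lt_of_stepB_eq_neg_one {ω : Fin n → Bool} {p : ℕ} (h : stepB n ω p = -1) : p < n := by
  by_contra hp
  rw [stepB_of_le ω (not_lt.mp hp)] at h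
  omega

@[simp]
lemma stepB_cons_zero (b : Bool) (ω : Fin n → Bool) :
    stepB (n + 1) (Fin.cons b ω) 0 = stepSign b :=
  stepB_of_lt _ n.succ_pos

@[simp]
lemma stepB_cons_succ (b : Bool) (ω : Fin n → Bool) (p : ℕ) :
    stepB (n + 1) (Fin.cons b ω) (p + 1) = stepB n ω p := by
  by_cases hp : p < n
  · rw [stepB_of_lt _ (Nat.succ_lt_succ hp), stepB_of_lt _ hp]
    exact congrArg stepSign (Fin.cons_succ (α := fun _ => Bool) b ω ⟨p, hp⟩)
  · rw [stepB_of_le _ (by omega), stepB_of_le _ (by omega)]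

lemma stepB_cons_add_succ (b : Bool) (ω : Fin n → Bool) (i m : ℕ) :
    stepB (n + 1) (Fin.cons b ω) (i + 1 + m) = stepB n ω (i + m) := by
  rw [Nat.add_right_comm, stepB_cons_succ]

@[simp]
lemma hgtB_zero (ω : Fin n → Bool) (h : ℤ) : hgtB n ω h 0 = h := by
  simp [hgtB]

lemma hgtB_cons_succ (b : Bool) (ω : Fin n → Bool) (h : ℤ) (i : ℕ) :
    hgtB (n + 1) (Fin.cons b ω) h (i + 1) = hgtB n ω (h + stepSign b) i := by
  simp only [hgtB, Finset.sum_range_succ', stepB_cons_succ, stepB_cons_zero]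
  ring

end Steps

def leadRun : (n : ℕ) → (Fin n → Bool) → ℕ
  | 0, _ => 0
  | n + 1, ω => if ω 0 then 0 else leadRun n (Fin.tail ω) + 1

section LeadRun

variable {n : ℕ}

@[simp]
lemma leadRun_cons_true (ω : Fin n → Bool) : leadRun (n + 1) (Fin.cons true ω) = 0 := by
  simp [leadRun]

@[simp]
lemma leadRun_cons_false (ω : Fin n → Bool) :
    leadRun (n + 1) (Fin.cons false ω) = leadRun n ω + 1 := by
  simp [leadRun]

lemma leadRun_le (ω : Fin n → Bool) : leadRun n ω ≤ n := by
  induction n with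
  | zero => rfl
  | succ n ih =>
    cases ω using Fin.consCases with
    | cons b ω => cases b <;> simp [ih ω]

lemma eq_leadRun_iff (ω : Fin n → Bool) (j : ℕ) :
    j = leadRun n ω ↔ (∀ m < j, stepB n ω m = -1) ∧ stepB n ω j ≠ -1 := by
  induction n generalizing j with
  | zero =>
    cases j with
    | zero => simp [leadRun, stepB_of_le]
    | succ j => simpa [leadRun, stepB_of_le] using ⟨0, j.zero_le⟩
  | succ n ih =>
    cases ω using Fin.consCases with
    | cons b ω =>
      cases j with
      | zero => cases b <;> simp [stepSign]
      | succ j =>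
        rw [Nat.forall_lt_succ_left]
        cases b <;> simp [stepSign, ih]

end LeadRun

section Blocks

variable {n : ℕ}

def blockStarts (n : ℕ) (ω : Fin n → Bool) (j : ℕ) : Finset ℕ :=
  (Finset.range n).filter fun i =>
    (∀ m < j, stepB n ω (i + m) = -1) ∧ stepB n ω (i + j) ≠ -1 ∧
      (i = 0 ∨ stepB n ω (i - 1) ≠ -1)

lemma card_blockStarts (ω : Fin n → Bool) (j : ℕ) :
    (blockStarts n ω j).card = downBlocks n ω j :=
  rfl

def innerBlocks (n : ℕ) (ω : Fin n → Bool) (j : ℕ) : ℕ :=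
  ((blockStarts n ω j).erase 0).card

lemma downBlocks_eq_zero_of_lt (ω : Fin n → Bool) {j : ℕ} (hj : n < j) :
    downBlocks n ω j = 0 := by
  rw [← card_blockStarts, Finset.card_eq_zero, Finset.eq_empty_iff_forall_notMem]
  intro i hi
  obtain ⟨hin, hrun, -⟩ := Finset.mem_filter.mp hi
  have := lt_of_stepB_eq_neg_one (hrun (n - i) (by simp at hin; omega))
  omega

lemma zero_mem_blockStarts_iff (ω : Fin n → Bool) {j : ℕ} (hj : 1 ≤ j) :
    0 ∈ blockStarts n ω j ↔ j = leadRun n ω := by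
  rw [eq_leadRun_iff]
  simp only [blockStarts, Finset.mem_filter, Finset.mem_range, zero_add, true_or, and_true]
  exact ⟨And.right, fun h => ⟨lt_of_stepB_eq_neg_one (h.1 0 hj), h⟩⟩

lemma downBlocks_eq_innerBlocks_add (ω : Fin n → Bool) {j : ℕ} (hj : 1 ≤ j) :
    downBlocks n ω j = innerBlocks n ω j + if j = leadRun n ω then 1 else 0 := by
  rw [innerBlocks, ← card_blockStarts, if_congr (zero_mem_blockStarts_iff ω hj).symm rfl rfl]
  split_ifs with h0
  · exact (Finset.card_erase_add_one h0).symm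
  · rw [Finset.erase_eq_of_notMem h0, add_zero]

lemma succ_mem_blockStarts_cons_iff (b : Bool) (ω : Fin n → Bool) (j i : ℕ) :
    i + 1 ∈ blockStarts (n + 1) (Fin.cons b ω) j ↔
      i ∈ blockStarts n ω j ∧ (i = 0 → b = true) := by
  simp only [blockStarts, Finset.mem_filter, Finset.mem_range, stepB_cons_add_succ,
    Nat.add_sub_cancel, add_lt_add_iff_right, Nat.add_one_ne_zero, false_or]
  cases i with
  | zero => cases b <;> simp [stepSign]
  | succ i => simp

lemma innerBlocks_cons (b : Bool) (ω : Fin n → Bool) (j : ℕ) :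
    innerBlocks (n + 1) (Fin.cons b ω) j =
      if b then downBlocks n ω j else innerBlocks n ω j := by
  have hshift : (blockStarts (n + 1) (Fin.cons b ω) j).erase 0 =
      (if b then blockStarts n ω j else (blockStarts n ω j).erase 0).map
        (addRightEmbedding 1) := by
    ext i
    cases i with
    | zero => simp
    | succ i => cases b <;> simp [succ_mem_blockStarts_cons_iff, and_comm]
  rw [innerBlocks, hshift, Finset.card_map]
  split <;> rfl

end Blocks

/-- The weight `∏ j, z j ^ downBlocks n ω j` of `ω` preceded by `k` further `-1`'s. -/
noncomputable def runWeight (z : ℕ → ℝ) (k : ℕ) {n : ℕ} (ω : Fin n → Bool) : ℝ :=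
  z (k + leadRun n ω) * ∏ j ∈ Finset.Icc 1 n, z j ^ innerBlocks n ω j

section Weight

variable {z : ℕ → ℝ} {n : ℕ}

lemma prod_Icc_succ_pow_of_eq_zero {f : ℕ → ℕ} (hf : f (n + 1) = 0) :
    ∏ j ∈ Finset.Icc 1 (n + 1), z j ^ f j = ∏ j ∈ Finset.Icc 1 n, z j ^ f j := by
  rw [Finset.prod_Icc_succ_top (by omega), hf, pow_zero, mul_one]

lemma runWeight_zero (hz0 : z 0 = 1) (ω : Fin n → Bool) :
    runWeight z 0 ω = ∏ j ∈ Finset.Icc 1 n, z j ^ downBlocks n ω j := by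
  have hsplit : ∏ j ∈ Finset.Icc 1 n, z j ^ downBlocks n ω j =
      (∏ j ∈ Finset.Icc 1 n, z j ^ innerBlocks n ω j) *
        ∏ j ∈ Finset.Icc 1 n, if j = leadRun n ω then z j else 1 := by
    rw [← Finset.prod_mul_distrib]
    refine Finset.prod_congr rfl fun j hj => ?_
    rw [downBlocks_eq_innerBlocks_add ω (Finset.mem_Icc.mp hj).1, pow_add]
    split_ifs <;> simp
  rw [hsplit, Finset.prod_ite_eq', runWeight, zero_add, mul_comm]
  split_ifs with hL
  · rfl
  · have : leadRun n ω = 0 := by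
      have := leadRun_le ω
      simp only [Finset.mem_Icc, not_and_or] at hL
      omega
    rw [this, hz0]

lemma runWeight_cons_true (hz0 : z 0 = 1) (k : ℕ) (ω : Fin n → Bool) :
    runWeight z k (Fin.cons true ω) = z k * runWeight z 0 ω := by
  rw [runWeight_zero hz0]
  simp only [runWeight, leadRun_cons_true, add_zero, innerBlocks_cons, if_true]
  rw [prod_Icc_succ_pow_of_eq_zero (downBlocks_eq_zero_of_lt ω n.lt_succ_self)]

lemma runWeight_cons_false (k : ℕ) (ω : Fin n → Bool) :
    runWeight z k (Fin.cons false ω) = runWeight z (k + 1) ω := by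
  have hinner : innerBlocks n ω (n + 1) = 0 := by
    have := downBlocks_eq_innerBlocks_add ω (Nat.le_add_left 1 n)
    rw [downBlocks_eq_zero_of_lt ω n.lt_succ_self] at this
    omega
  simp only [runWeight, leadRun_cons_false, innerBlocks_cons, Bool.false_eq_true, if_false]
  rw [prod_Icc_succ_pow_of_eq_zero hinner, Nat.add_right_comm, add_assoc]

lemma runWeight_nonneg (hz : ∀ j, 0 ≤ z j) (k : ℕ) (ω : Fin n → Bool) :
    0 ≤ runWeight z k ω :=
  mul_nonneg (hz _) (Finset.prod_nonneg fun j _ => pow_nonneg (hz j) _)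

lemma runWeight_succ_le (hz : ∀ j, 0 ≤ z j) (hsub : ∀ a b : ℕ, z (a + b + 1) ≤ z a * z b)
    (k : ℕ) (ω : Fin n → Bool) : runWeight z (k + 1) ω ≤ z k * runWeight z 0 ω := by
  rw [runWeight, runWeight, zero_add, ← mul_assoc, Nat.add_right_comm]
  exact mul_le_mul_of_nonneg_right (hsub k _)
    (Finset.prod_nonneg fun j _ => pow_nonneg (hz j) _)

end Weight

noncomputable def topUpProb (K t h : ℤ) : ℝ :=
  1 / 2 * (((K : ℝ) - t - h) / ((K : ℝ) - t))

lemma topUpProb_nonneg {K t h : ℤ} (h0 : 0 ≤ h) (hK : h ≤ K - t) : 0 ≤ topUpProb K t h := by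
  have : (h : ℝ) ≤ K - t := by exact_mod_cast hK
  have : (0 : ℝ) ≤ h := by exact_mod_cast h0
  unfold topUpProb
  apply mul_nonneg <;> apply_rules [div_nonneg] <;> linarith

lemma topUpProb_le_half {K t h : ℤ} (h0 : 0 ≤ h) (hK : h ≤ K - t) : topUpProb K t h ≤ 1 / 2 := by
  have : (h : ℝ) ≤ K - t := by exact_mod_cast hK
  have : (0 : ℝ) ≤ h := by exact_mod_cast h0
  have : ((K : ℝ) - t - h) / (K - t) ≤ 1 := div_le_one_of_le₀ (by linarith) (by linarith)
  unfold topUpProb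
  linarith

section TopLaw

variable {n : ℕ}

lemma qTop_zero (K t : ℤ) (ω : Fin n → Bool) (h : ℤ) : qTop K t n ω h 0 = topUpProb K t h := by
  simp [qTop, topUpProb]

lemma qTop_cons_succ (K t : ℤ) (b : Bool) (ω : Fin n → Bool) (h : ℤ) (i : ℕ) :
    qTop K t (n + 1) (Fin.cons b ω) h (i + 1) = qTop K (t + 1) n ω (h + stepSign b) i := by
  simp only [qTop, hgtB_cons_succ]
  push_cast
  ring_nf

lemma pTopProb_cons (K t : ℤ) (b : Bool) (ω : Fin n → Bool) (h : ℤ) :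
    pTopProb K t (n + 1) (Fin.cons b ω) h =
      (if b then topUpProb K t h else 1 - topUpProb K t h) *
        pTopProb K (t + 1) n ω (h + stepSign b) := by
  simp only [pTopProb, Finset.prod_range_succ' _ n, stepB_cons_succ, qTop_cons_succ,
    stepB_cons_zero, qTop_zero, mul_comm (∏ i ∈ Finset.range n, _)]
  cases b <;> simp [stepSign]

lemma forall_hgtB_cons_le_iff (K t : ℤ) (b : Bool) (ω : Fin n → Bool) (h : ℤ) :
    (∀ i ≤ n + 1, hgtB (n + 1) (Fin.cons b ω) h i ≤ K - t - i) ↔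
      h ≤ K - t ∧ ∀ i ≤ n, hgtB n ω (h + stepSign b) i ≤ K - (t + 1) - i := by
  constructor
  · intro H
    refine ⟨by simpa using H 0 (Nat.zero_le _), fun i hi => ?_⟩
    have := H (i + 1) (by omega)
    rw [hgtB_cons_succ] at this
    push_cast at this
    linarith
  · rintro ⟨h0, H⟩ (_ | i) hi
    · simpa using h0
    · have := H i (by omega)
      rw [hgtB_cons_succ]
      push_cast
      linarith

end TopLaw

lemma sum_pi_fin_succ_bool {M : Type*} [AddCommMonoid M] {n : ℕ} (f : (Fin (n + 1) → Bool) → M) :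
    ∑ ω, f ω = ∑ ω, f (Fin.cons true ω) + ∑ ω, f (Fin.cons false ω) := by
  rw [← (Fin.consEquiv fun _ => Bool).sum_comp f, Fintype.sum_prod_type, Fintype.sum_bool]
  rfl

lemma sum_admissible_succ (K t h : ℤ) {n : ℕ} (hK : h ≤ K - t) (f : (Fin (n + 1) → Bool) → ℝ) :
    ∑ ω ∈ Finset.univ.filter
        (fun ω : Fin (n + 1) → Bool => ∀ i ≤ n + 1, hgtB (n + 1) ω h i ≤ K - t - (i : ℤ)),
        pTopProb K t (n + 1) ω h * f ω =
      topUpProb K t h * ∑ ω ∈ Finset.univ.filter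
          (fun ω : Fin n → Bool => ∀ i ≤ n, hgtB n ω (h + 1) i ≤ K - (t + 1) - (i : ℤ)),
          pTopProb K (t + 1) n ω (h + 1) * f (Fin.cons true ω) +
        (1 - topUpProb K t h) * ∑ ω ∈ Finset.univ.filter
          (fun ω : Fin n → Bool => ∀ i ≤ n, hgtB n ω (h - 1) i ≤ K - (t + 1) - (i : ℤ)),
          pTopProb K (t + 1) n ω (h - 1) * f (Fin.cons false ω) := by
  simp only [Finset.sum_filter, sum_pi_fin_succ_bool, Finset.mul_sum, forall_hgtB_cons_le_iff,
    hK, true_and, pTopProb_cons, stepSign, Bool.false_eq_true, ↓reduceIte, ← sub_eq_add_neg]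
  congr 1 <;> refine Finset.sum_congr rfl fun ω _ => ?_ <;> split_ifs <;> ring

/-- `X`, `Y`: the top-law sums over paths starting with an up- resp. down-step; `A`, `B`: the
corresponding uniform sums, the down branch being the lighter one (`B ≤ x * A`). -/
lemma biased_mix_le {q x c A B X Y : ℝ} (hq0 : 0 ≤ q) (hq : q ≤ 1 / 2) (hx : 0 ≤ x) (hc : 0 ≤ c)
    (hX : X ≤ c * A) (hY : Y ≤ c * B) (hBA : B ≤ x * A) :
    q * (x * X) + (1 - q) * Y ≤ c / 2 * (x * A + B) := by
  nlinarith [mul_le_mul_of_nonneg_left hX (mul_nonneg hq0 hx),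
    mul_le_mul_of_nonneg_left hY (by linarith : 0 ≤ 1 - q),
    mul_nonneg (mul_nonneg hc (by linarith : 0 ≤ 1 / 2 - q)) (by linarith : 0 ≤ x * A - B)]

lemma sum_runWeight_fin_succ {z : ℕ → ℝ} (hz0 : z 0 = 1) (k n : ℕ) :
    ∑ ω : Fin (n + 1) → Bool, runWeight z k ω =
      z k * ∑ ω : Fin n → Bool, runWeight z 0 ω + ∑ ω : Fin n → Bool, runWeight z (k + 1) ω := by
  simp only [sum_pi_fin_succ_bool, runWeight_cons_true hz0, runWeight_cons_false, ← Finset.mul_sum]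

lemma sum_admissible_pTopProb_mul_runWeight_le {z : ℕ → ℝ} (hz0 : z 0 = 1) (hz : ∀ j, 0 ≤ z j)
    (hsub : ∀ a b : ℕ, z (a + b + 1) ≤ z a * z b) (K t h : ℤ) (n k : ℕ) (hn : (n : ℤ) ≤ h + 1) :
    ∑ ω ∈ Finset.univ.filter
        (fun ω : Fin n → Bool => ∀ i ≤ n, hgtB n ω h i ≤ K - t - (i : ℤ)),
        pTopProb K t n ω h * runWeight z k ω ≤
      (2 : ℝ) ^ (-(n : ℤ)) * ∑ ω : Fin n → Bool, runWeight z k ω := by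
  induction n generalizing t h k with
  | zero =>
    simp only [pTopProb, Finset.range_zero, Finset.prod_empty, one_mul, CharP.cast_eq_zero,
      neg_zero, zpow_zero]
    exact Finset.sum_le_sum_of_subset_of_nonneg (Finset.filter_subset _ _)
      fun ω _ _ => runWeight_nonneg hz k ω
  | succ n ih =>
    by_cases hK : h ≤ K - t
    · have hpow : (2 : ℝ) ^ (-((n + 1 : ℕ) : ℤ)) = 2 ^ (-(n : ℤ)) / 2 := by
        rw [Nat.cast_succ, neg_add, zpow_add₀ two_ne_zero, zpow_neg_one, div_eq_mul_inv]
      rw [sum_admissible_succ K t h hK, hpow, sum_runWeight_fin_succ hz0]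
      simp only [runWeight_cons_true hz0, runWeight_cons_false,
        mul_left_comm (pTopProb K (t + 1) n _ (h + 1)) (z k), ← Finset.mul_sum]
      exact biased_mix_le (topUpProb_nonneg (by omega) hK) (topUpProb_le_half (by omega) hK)
        (hz k) (by positivity) (ih (t + 1) (h + 1) 0 (by omega))
        (ih (t + 1) (h - 1) (k + 1) (by omega))
        (by rw [Finset.mul_sum]; exact Finset.sum_le_sum fun ω _ => runWeight_succ_le hz hsub k ω)
    · have hempty : Finset.univ.filter (fun ω : Fin (n + 1) → Bool =>
          ∀ i ≤ n + 1, hgtB (n + 1) ω h i ≤ K - t - (i : ℤ)) = ∅ :=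
        Finset.filter_false_of_mem fun ω _ H => hK (by simpa using H 0 (Nat.zero_le _))
      rw [hempty, Finset.sum_empty]
      exact mul_nonneg (by positivity) (Finset.sum_nonneg fun ω _ => runWeight_nonneg hz k ω)

theorem top_law_dominated_by_srw_general (z : ℕ → ℝ) (hz0 : z 0 = 1)
    (hz : ∀ j, 1 ≤ j → 0 < z j ∧ z j ≤ 1)
    (hsub : ∀ a b : ℕ, z (a + b + 1) ≤ z a * z b)
    (K t h : ℤ) (n : ℕ)
    (hh2n : 2 * (n : ℤ) ≤ h) :
    ∑ ω ∈ Finset.univ.filter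
        (fun ω : Fin n → Bool => ∀ i ≤ n, hgtB n ω h i ≤ K - t - (i : ℤ)),
        pTopProb K t n ω h * ∏ j ∈ Finset.Icc 1 n, z j ^ downBlocks n ω j ≤
      (2 : ℝ) ^ (-(n : ℤ)) * ∑ ω : Fin n → Bool,
        ∏ j ∈ Finset.Icc 1 n, z j ^ downBlocks n ω j := by
  have hz_nonneg : ∀ j, 0 ≤ z j
    | 0 => hz0 ▸ zero_le_one
    | j + 1 => (hz (j + 1) j.succ_pos).1.le
  simp only [← runWeight_zero hz0]
  exact sum_admissible_pTopProb_mul_runWeight_le hz0 hz_nonneg hsub K t h n 0 (by omega)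

/-- Comparison of the `top` law with the simple random walk: the down-run weighted sum
over admissible paths is dominated by the simple random walk expectation. -/
theorem top_law_dominated_by_srw (z : ℕ → ℝ) (hz0 : z 0 = 1)
    (hz : ∀ j, 1 ≤ j → 0 < z j ∧ z j ≤ 1)
    (hsub : ∀ a b : ℕ, z (a + b + 1) ≤ z a * z b)
    (K t h : ℤ) (n : ℕ) (hn : 1 ≤ n) (ht : 0 ≤ t) (htn : t + (n : ℤ) ≤ K)
    (hh2n : 2 * (n : ℤ) ≤ h) (hhK : h ≤ K - t) :
    ∑ ω ∈ Finset.univ.filter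
        (fun ω : Fin n → Bool => ∀ i ≤ n, hgtB n ω h i ≤ K - t - (i : ℤ)),
        pTopProb K t n ω h * ∏ j ∈ Finset.Icc 1 n, z j ^ downBlocks n ω j ≤
      (2 : ℝ) ^ (-(n : ℤ)) * ∑ ω : Fin n → Bool,
        ∏ j ∈ Finset.Icc 1 n, z j ^ downBlocks n ω j :=
  top_law_dominated_by_srw_general z hz0 hz hsub K t h n hh2n
end
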